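/- Let M be a left R-module such that M has infinitely many nontrivial submodules and the clique number ω(M) of the intersection graph G(M) is finite. Then: (i) M has finite length and Soc(M) is an essential submodule of M; (ii) there exist simple submodules S and S' of M with S ≅ S', S ∩ S' = 0, Soc(M) = S + S', and End(S) an infinite division ring; (iii) if N₁ and N₂ are nontrivial submodules of M neither of which contains Soc(M), then either N₁ ∩ N₂ = 0, or N₁ ∩ Soc(M) = N₂ ∩ Soc(M) and this intersection is a simple submodule of M. -/

import Mathlib

/-!
A chain of nonzero submodules is a clique, and so is any family of proper submodules containing
a fixed nonzero submodule `X`. Hence `M` has finite length, only finitely many submodules lie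
above each `X ≠ 0`, and, since every nonzero submodule contains a simple one, `M` has infinitely
many simple submodules (atoms). For an atom `A` the infinitely many atoms `T` are spread over the
finitely many sums `A ⊔ T`, so one such sum `P` contains infinitely many atoms. By modularity an
atom `B ≰ P` would make the `T ⊔ B` (`T ≤ P` an atom) pairwise distinct, which is impossible;
so `P = Soc(M)` and every atom is covered by `Soc(M)`. This gives (iii), shows that two distinct
atoms are complements of any third one in `Soc(M)` and hence isomorphic, and the infinitely many
complements of `S` in `Soc(M) = S ⊕ S'` give projections onto `S` that already differ on `S'`,
so `Hom(S', S) ≅ End(S)` is infinite.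
-/

/-- A clique of the intersection graph `G(M)`: a set of nontrivial submodules any two
distinct members of which have nonzero intersection. -/
def IsIntClique {R : Type*} [Ring R] {M : Type*} [AddCommGroup M] [Module R M]
    (C : Set (Submodule R M)) : Prop :=
  (∀ N ∈ C, N ≠ ⊥ ∧ N ≠ ⊤) ∧ ∀ N ∈ C, ∀ K ∈ C, N ≠ K → N ⊓ K ≠ ⊥

/-- The clique number `ω(M)` of `G(M)`: the supremum of the cardinalities of cliques. -/
noncomputable def cliqueNumber (R : Type*) [Ring R] (M : Type*) [AddCommGroup M]
    [Module R M] : Cardinal :=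
  sSup {c : Cardinal | ∃ C : Set (Submodule R M), IsIntClique C ∧ c = Cardinal.mk C}

/-- The socle of a module: the sum of all its simple submodules. -/
def socle (R : Type*) [Ring R] (M : Type*) [AddCommGroup M] [Module R M] :
    Submodule R M :=
  sSup {A : Submodule R M | IsSimpleModule R A}

theorem wellFoundedLT_of_forall_isChain_finite {α : Type*} [Preorder α]
    (h : ∀ s : Set α, IsChain (· ≤ ·) s → s.Finite) : WellFoundedLT α := by
  refine ⟨RelEmbedding.wellFounded_iff_isEmpty.mpr ⟨fun f => ?_⟩⟩
  have hf : StrictAnti f := fun _ _ hab => f.map_rel_iff.mpr hab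
  exact Set.infinite_range_of_injective hf.injective (h _ hf.antitone.isChain_range)

theorem wellFoundedGT_of_forall_isChain_finite {α : Type*} [Preorder α]
    (h : ∀ s : Set α, IsChain (· ≤ ·) s → s.Finite) : WellFoundedGT α :=
  wellFoundedLT_of_forall_isChain_finite (α := αᵒᵈ) fun s hs => h s hs.symm

namespace Submodule

variable {R : Type*} [Ring R] {M : Type*} [AddCommGroup M] [Module R M]

theorem nonempty_linearEquiv_of_sup_eq {S S' T : Submodule R M} (hS : Disjoint S T)
    (hS' : Disjoint S' T) (h : S ⊔ T = S' ⊔ T) : Nonempty (S ≃ₗ[R] S') := by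
  -- each of `S`, `S'` maps isomorphically onto its image in `M ⧸ T`, and the images agree
  have equivMap : ∀ U : Submodule R M, Disjoint U T → U ≃ₗ[R] U.map T.mkQ := fun U hU =>
    (LinearEquiv.ofInjective (T.mkQ ∘ₗ U.subtype) (LinearMap.ker_eq_bot.mp (by
      rw [LinearMap.ker_comp, ker_mkQ, ← disjoint_iff_comap_eq_bot.mp hU]))).trans
      (LinearEquiv.ofEq _ _ (by rw [LinearMap.range_comp, range_subtype]))
  have hmap : S.map T.mkQ = S'.map T.mkQ :=
    comap_injective_of_surjective T.mkQ_surjective (by rw [comap_map_mkQ, comap_map_mkQ,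
      sup_comm, h, sup_comm])
  exact ⟨(equivMap S hS).trans ((LinearEquiv.ofEq _ _ hmap).trans (equivMap S' hS').symm)⟩

theorem isCompl_comap_subtype_of_disjoint_of_sup_eq {N A B : Submodule R M}
    (hAB : Disjoint A B) (h : A ⊔ B = N) :
    IsCompl (A.comap N.subtype) (B.comap N.subtype) := by
  subst h
  rw [(A ⊔ B).mapIic.isCompl_iff, Set.Iic.isCompl_iff]
  simpa using hAB

theorem infinite_linearMap_of_infinite_isCompl {p q : Submodule R M} (hpq : IsCompl p q)
    (h : {r : Submodule R M | IsCompl p r}.Infinite) : Infinite (q →ₗ[R] p) := by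
  have : Infinite {r // IsCompl p r} := h.to_subtype
  refine Infinite.of_injective
    (fun r : {r // IsCompl p r} => (p.isComplEquivProj r : M →ₗ[R] p) ∘ₗ q.subtype)
    fun r r' hrr' => p.isComplEquivProj.injective (Subtype.ext ?_)
  -- a projection onto `p` is the identity on `p`, so it is determined by its restriction to `q`
  refine LinearMap.ext_on_codisjoint hpq.codisjoint (fun x hx => ?_) fun x hx => ?_
  · exact ((p.isComplEquivProj r).2 ⟨x, hx⟩).trans ((p.isComplEquivProj r').2 ⟨x, hx⟩).symm
  · exact LinearMap.congr_fun hrr' ⟨x, hx⟩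

end Submodule

section CliqueNumber

variable {R : Type*} [Ring R] {M : Type*} [AddCommGroup M] [Module R M]

theorem IsIntClique.finite (homega : cliqueNumber R M < Cardinal.aleph0)
    {C : Set (Submodule R M)} (hC : IsIntClique C) : C.Finite := by
  have hbdd : BddAbove {c | ∃ C : Set (Submodule R M), IsIntClique C ∧ c = Cardinal.mk C} :=
    ⟨Cardinal.mk (Submodule R M), by rintro _ ⟨C, -, rfl⟩; exact Cardinal.mk_set_le C⟩
  exact Cardinal.mk_lt_aleph0_iff.mp ((le_csSup hbdd ⟨C, hC, rfl⟩).trans_lt homega)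

theorem isIntClique_of_isChain {C : Set (Submodule R M)} (hC : IsChain (· ≤ ·) C)
    (hnt : ∀ N ∈ C, N ≠ ⊥ ∧ N ≠ ⊤) : IsIntClique C := by
  refine ⟨hnt, fun N hN K hK hNK => ?_⟩
  rcases hC.total hN hK with h | h
  · simpa [inf_eq_left.mpr h] using (hnt N hN).1
  · simpa [inf_eq_right.mpr h] using (hnt K hK).1

theorem isIntClique_setOf_le {X : Submodule R M} (hX : X ≠ ⊥) :
    IsIntClique {N | X ≤ N ∧ N ≠ ⊤} :=
  ⟨fun _ hN => ⟨ne_bot_of_le_ne_bot hX hN.1, hN.2⟩, fun _ hN _ hK _ =>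
    ne_bot_of_le_ne_bot hX (le_inf hN.1 hK.1)⟩

theorem IsChain.finite_of_cliqueNumber_lt (homega : cliqueNumber R M < Cardinal.aleph0)
    {C : Set (Submodule R M)} (hC : IsChain (· ≤ ·) C) : C.Finite := by
  have hclique : IsIntClique (C \ {⊥, ⊤}) :=
    isIntClique_of_isChain (hC.mono Set.sdiff_subset) fun N hN => by
      simpa [not_or] using hN.2
  exact ((Set.toFinite {⊥, ⊤}).union (hclique.finite homega)).subset
    (Set.sdiff_subset_iff.mp subset_rfl)

theorem finite_setOf_le (homega : cliqueNumber R M < Cardinal.aleph0)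
    {X : Submodule R M} (hX : X ≠ ⊥) : {N | X ≤ N}.Finite :=
  (((isIntClique_setOf_le hX).finite homega).insert ⊤).subset fun N hN => by
    by_cases h : N = ⊤ <;> simp_all

theorem isFiniteLength_of_cliqueNumber_lt (homega : cliqueNumber R M < Cardinal.aleph0) :
    IsFiniteLength R M :=
  isFiniteLength_iff_isNoetherian_isArtinian.mpr
    ⟨isNoetherian_iff'.mpr (wellFoundedGT_of_forall_isChain_finite fun _ hs =>
        hs.finite_of_cliqueNumber_lt homega),
      wellFoundedLT_of_forall_isChain_finite fun _ hs => hs.finite_of_cliqueNumber_lt homega⟩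

theorem isAtomic_of_cliqueNumber_lt (homega : cliqueNumber R M < Cardinal.aleph0) :
    IsAtomic (Submodule R M) :=
  have := (isFiniteLength_iff_isNoetherian_isArtinian.mp
    (isFiniteLength_of_cliqueNumber_lt homega)).2
  isAtomic_of_orderBot_wellFounded_lt wellFounded_lt

theorem infinite_setOf_isAtom (hinf : {N : Submodule R M | N ≠ ⊥ ∧ N ≠ ⊤}.Infinite)
    (homega : cliqueNumber R M < Cardinal.aleph0) :
    {A : Submodule R M | IsAtom A}.Infinite := by
  have := isAtomic_of_cliqueNumber_lt homega
  intro hfin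
  refine hinf ((hfin.biUnion fun A hA => finite_setOf_le homega hA.1).subset fun N hN => ?_)
  obtain ⟨A, hA, hAN⟩ := (eq_bot_or_exists_atom_le N).resolve_left hN.1
  exact Set.mem_biUnion hA hAN

theorem le_of_infinite_setOf_isAtom_le (homega : cliqueNumber R M < Cardinal.aleph0)
    {P : Submodule R M} (hP : {T : Submodule R M | IsAtom T ∧ T ≤ P}.Infinite)
    {B : Submodule R M} (hB : IsAtom B) : B ≤ P := by
  by_contra hBP
  have hdisj : B ⊓ P = ⊥ := (hB.not_le_iff_disjoint.mp hBP).eq_bot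
  -- modularity: `(T ⊔ B) ⊓ P = T` for `T ≤ P`
  have hinj : Set.InjOn (· ⊔ B) {T : Submodule R M | IsAtom T ∧ T ≤ P} :=
    fun T hT T' hT' h => by
      simpa [sup_inf_assoc_of_le B hT.2, sup_inf_assoc_of_le B hT'.2, hdisj]
        using congrArg (· ⊓ P) h
  exact (hP.image hinj) ((finite_setOf_le homega hB.1).subset
    (Set.image_subset_iff.mpr fun T _ => show B ≤ T ⊔ B from le_sup_right))

theorem le_socle_of_isAtom {A : Submodule R M} (hA : IsAtom A) : A ≤ socle R M :=
  le_sSup (isSimpleModule_iff_isAtom.mpr hA)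

theorem socle_le_iff {P : Submodule R M} :
    socle R M ≤ P ↔ ∀ A : Submodule R M, IsAtom A → A ≤ P := by
  simp [socle, isSimpleModule_iff_isAtom]

theorem socle_inf_ne_bot (homega : cliqueNumber R M < Cardinal.aleph0)
    {K : Submodule R M} (hK : K ≠ ⊥) : socle R M ⊓ K ≠ ⊥ := by
  have := isAtomic_of_cliqueNumber_lt homega
  obtain ⟨A, hA, hAK⟩ := (eq_bot_or_exists_atom_le K).resolve_left hK
  exact ne_bot_of_le_ne_bot hA.1 (le_inf (le_socle_of_isAtom hA) hAK)

theorem IsAtom.covBy_socle (hinf : {N : Submodule R M | N ≠ ⊥ ∧ N ≠ ⊤}.Infinite)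
    (homega : cliqueNumber R M < Cardinal.aleph0) {A : Submodule R M} (hA : IsAtom A) :
    A ⋖ socle R M := by
  -- the finitely many submodules above `A` cannot all have finite fibres under `T ↦ A ⊔ T`
  obtain ⟨P, hP⟩ : ∃ P, {T : Submodule R M | IsAtom T ∧ A ⊔ T = P}.Infinite := by
    by_contra! h
    refine infinite_setOf_isAtom hinf homega
      (((finite_setOf_le homega hA.1).biUnion fun P _ => h P).subset ?_)
    exact fun T hT => Set.mem_biUnion (show A ≤ A ⊔ T from le_sup_left) ⟨hT, rfl⟩
  obtain ⟨T, ⟨hT, rfl⟩, hTA⟩ := (hP.sdiff (Set.finite_singleton A)).nonempty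
  have hsocle : A ⊔ T = socle R M := by
    refine le_antisymm (sup_le (le_socle_of_isAtom hA) (le_socle_of_isAtom hT))
      (socle_le_iff.mpr fun B hB => le_of_infinite_setOf_isAtom_le homega ?_ hB)
    exact hP.mono fun T' (hT' : IsAtom T' ∧ A ⊔ T' = A ⊔ T) =>
      ⟨hT'.1, hT'.2 ▸ le_sup_right⟩
  rw [← hsocle]
  exact covBy_sup_of_inf_covBy_right
    ((hA.disjoint_of_ne hT (Ne.symm hTA)).eq_bot ▸ hT.bot_covBy)

theorem sup_eq_socle_of_isAtom (hinf : {N : Submodule R M | N ≠ ⊥ ∧ N ≠ ⊤}.Infinite)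
    (homega : cliqueNumber R M < Cardinal.aleph0) {S T : Submodule R M}
    (hS : IsAtom S) (hT : IsAtom T) (hST : S ≠ T) : S ⊔ T = socle R M :=
  ((hS.covBy_socle hinf homega).eq_or_eq le_sup_left
    (sup_le (le_socle_of_isAtom hS) (le_socle_of_isAtom hT))).resolve_left fun h =>
      hST ((hS.le_iff_eq hT.1).mp (h ▸ le_sup_right)).symm

theorem isAtom_inf_socle (hinf : {N : Submodule R M | N ≠ ⊥ ∧ N ≠ ⊤}.Infinite)
    (homega : cliqueNumber R M < Cardinal.aleph0) {N : Submodule R M} (hN : N ≠ ⊥)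
    (hNs : ¬ socle R M ≤ N) : IsAtom (N ⊓ socle R M) := by
  have := isAtomic_of_cliqueNumber_lt homega
  obtain ⟨A, hA, hAN⟩ := (eq_bot_or_exists_atom_le N).resolve_left hN
  rcases (hA.covBy_socle hinf homega).eq_or_eq (le_inf hAN (le_socle_of_isAtom hA))
    inf_le_right with h | h
  · exact h ▸ hA
  · exact absurd (inf_eq_right.mp h) hNs

theorem nonempty_linearEquiv_of_isAtom
    (hinf : {N : Submodule R M | N ≠ ⊥ ∧ N ≠ ⊤}.Infinite)
    (homega : cliqueNumber R M < Cardinal.aleph0) {S S' : Submodule R M}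
    (hS : IsAtom S) (hS' : IsAtom S') : Nonempty (S ≃ₗ[R] S') := by
  obtain ⟨T, hT, hTSS'⟩ :=
    ((infinite_setOf_isAtom hinf homega).sdiff (Set.toFinite {S, S'})).nonempty
  simp only [Set.mem_insert_iff, Set.mem_singleton_iff, not_or] at hTSS'
  exact Submodule.nonempty_linearEquiv_of_sup_eq (hS.disjoint_of_ne hT (Ne.symm hTSS'.1))
    (hS'.disjoint_of_ne hT (Ne.symm hTSS'.2)) (by
      rw [sup_eq_socle_of_isAtom hinf homega hS hT (Ne.symm hTSS'.1),
        sup_eq_socle_of_isAtom hinf homega hS' hT (Ne.symm hTSS'.2)])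

theorem infinite_end_of_isAtom (hinf : {N : Submodule R M | N ≠ ⊥ ∧ N ≠ ⊤}.Infinite)
    (homega : cliqueNumber R M < Cardinal.aleph0) {S : Submodule R M} (hS : IsAtom S) :
    Infinite (Module.End R S) := by
  have hcompl : ∀ T, IsAtom T → T ≠ S →
      IsCompl (S.comap (socle R M).subtype) (T.comap (socle R M).subtype) :=
    fun T hT hTS => Submodule.isCompl_comap_subtype_of_disjoint_of_sup_eq
      (hS.disjoint_of_ne hT (Ne.symm hTS))
      (sup_eq_socle_of_isAtom hinf homega hS hT (Ne.symm hTS))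
  have hatoms : {T : Submodule R M | IsAtom T ∧ T ≠ S}.Infinite :=
    ((infinite_setOf_isAtom hinf homega).sdiff (Set.finite_singleton S)).mono
      fun T hT => ⟨hT.1, hT.2⟩
  have hinjOn :
      Set.InjOn (Submodule.comap (socle R M).subtype) {T : Submodule R M | IsAtom T ∧ T ≠ S} :=
    fun T hT T' hT' h => by
      simpa [Submodule.map_comap_subtype, inf_of_le_right (le_socle_of_isAtom hT.1),
        inf_of_le_right (le_socle_of_isAtom hT'.1)]
        using congrArg (Submodule.map (socle R M).subtype) h
  obtain ⟨S', hS'⟩ := hatoms.nonempty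
  have : Infinite (S'.comap (socle R M).subtype →ₗ[R] S.comap (socle R M).subtype) :=
    Submodule.infinite_linearMap_of_infinite_isCompl (hcompl S' hS'.1 hS'.2)
      ((hatoms.image hinjOn).mono (Set.image_subset_iff.mpr fun T hT => hcompl T hT.1 hT.2))
  exact Infinite.of_injective _ (LinearEquiv.arrowCongrAddEquiv
    ((Submodule.comapSubtypeEquivOfLe (le_socle_of_isAtom hS'.1)).trans
      (nonempty_linearEquiv_of_isAtom hinf homega hS'.1 hS).some)
    (Submodule.comapSubtypeEquivOfLe (le_socle_of_isAtom hS))).injective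

end CliqueNumber

/-- Let `M` have infinitely many nontrivial submodules and finite clique
number `ω(M)`.  Then: (i) `M` has finite length and `Soc(M)` is essential in `M`;
(ii) there are simple submodules `S ≅ S'` with `S ⊓ S' = ⊥`, `Soc(M) = S ⊔ S'` and `End(S)`
an infinite division ring; (iii) if `N₁`, `N₂` are nontrivial submodules neither of which
contains `Soc(M)`, then `N₁ ⊓ N₂ = ⊥`, or `N₁ ⊓ Soc(M) = N₂ ⊓ Soc(M)` and this intersection
is a simple submodule of `M`. -/
theorem statement13 {R : Type*} [Ring R] {M : Type*} [AddCommGroup M] [Module R M]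
    (hinf : {N : Submodule R M | N ≠ ⊥ ∧ N ≠ ⊤}.Infinite)
    (homega : cliqueNumber R M < Cardinal.aleph0) :
    (IsFiniteLength R M ∧
      (∀ K : Submodule R M, K ≠ ⊥ → socle R M ⊓ K ≠ ⊥)) ∧
    (∃ S S' : Submodule R M, IsSimpleModule R S ∧ IsSimpleModule R S' ∧
      Nonempty (S ≃ₗ[R] S') ∧ S ⊓ S' = ⊥ ∧ socle R M = S ⊔ S' ∧
      Infinite (Module.End R S) ∧ (∀ f : Module.End R S, f ≠ 0 → IsUnit f)) ∧
    (∀ N₁ N₂ : Submodule R M, N₁ ≠ ⊥ → N₁ ≠ ⊤ → N₂ ≠ ⊥ → N₂ ≠ ⊤ →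
      ¬ socle R M ≤ N₁ → ¬ socle R M ≤ N₂ →
      (N₁ ⊓ N₂ = ⊥ ∨
        (N₁ ⊓ socle R M = N₂ ⊓ socle R M ∧
          IsSimpleModule R ↥(N₁ ⊓ socle R M)))) := by
  refine ⟨⟨isFiniteLength_of_cliqueNumber_lt homega, fun K hK => socle_inf_ne_bot homega hK⟩,
    ?_, ?_⟩
  · obtain ⟨S, hS⟩ := (infinite_setOf_isAtom hinf homega).nonempty
    obtain ⟨S', hS', hS'S⟩ :=
      ((infinite_setOf_isAtom hinf homega).sdiff (Set.finite_singleton S)).nonempty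
    have hSS' : S ≠ S' := Ne.symm hS'S
    have hSimple : IsSimpleModule R S := isSimpleModule_iff_isAtom.mpr hS
    exact ⟨S, S', hSimple, isSimpleModule_iff_isAtom.mpr hS',
      nonempty_linearEquiv_of_isAtom hinf homega hS hS', (hS.disjoint_of_ne hS' hSS').eq_bot,
      (sup_eq_socle_of_isAtom hinf homega hS hS' hSS').symm,
      infinite_end_of_isAtom hinf homega hS,
      fun f hf => (Module.End.isUnit_iff f).mpr (LinearMap.bijective_of_ne_zero hf)⟩
  · intro N₁ N₂ hN₁ _ hN₂ _ hs₁ hs₂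
    have hA₁ := isAtom_inf_socle hinf homega hN₁ hs₁
    have hA₂ := isAtom_inf_socle hinf homega hN₂ hs₂
    by_cases heq : N₁ ⊓ socle R M = N₂ ⊓ socle R M
    · exact Or.inr ⟨heq, isSimpleModule_iff_isAtom.mpr hA₁⟩
    · refine Or.inl (not_not.mp fun hN => socle_inf_ne_bot homega hN ?_)
      rw [inf_comm, inf_inf_distrib_right]
      exact (hA₁.disjoint_of_ne hA₂ heq).eq_bot
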